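/- arXiv:1205.4356 — 4 statements merged into one kernel-verified Lean document; each statement's English description precedes it below -/
import Mathlib

section
/- Let G be a graph with all degrees at most d and let c : E(G) → [k] be an edge coloring. Then there exists an edge coloring c₁ : E(G) → [30d³k] such that c₁(e) ≡ c(e) modulo k for every edge e, and whenever c₁(e₁) = c₁(e₂) for distinct edges e₁, e₂, the distance between e₁ and e₂ in the line graph of G is at least 3. -/
/-!
Call two edges in conflict when they are at distance 1 or 2 in the line graph, i.e. adjacent in
its square. An edge has at most `2d` neighbours in the line graph, hence at most
`2d(2d + 1) < 30d³` conflicting edges, so a greedy coloring gives a conflict-free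
`g : E(G) → [30d³]`. Then `c₁(e) = c(e) + k g(e)` is congruent to `c(e)` modulo `k`, and
`c₁(e)` determines `g(e)`.
-/

theorem Set.Finite.ncard_biUnion_le_ncard_mul {α ι : Type*} {t : Set ι} (ht : t.Finite)
    {s : ι → Set α} {m : ℕ} (hs : ∀ i ∈ t, (s i).ncard ≤ m) :
    (⋃ i ∈ t, s i).ncard ≤ t.ncard * m :=
  calc (⋃ i ∈ t, s i).ncard = (⋃ i ∈ ht.toFinset, s i).ncard := by simp
    _ ≤ ∑ i ∈ ht.toFinset, (s i).ncard := Finset.set_ncard_biUnion_le _ _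
    _ ≤ ht.toFinset.card • m := Finset.sum_le_card_nsmul _ _ _ (by simpa using hs)
    _ = t.ncard * m := by rw [smul_eq_mul, Set.ncard_eq_toFinset_card t ht]

namespace SimpleGraph

variable {α : Type*}

theorem colorable_of_forall_ncard_neighborSet_lt [Finite α] (H : SimpleGraph α) {n : ℕ}
    (h : ∀ v, (H.neighborSet v).ncard < n) : H.Colorable n := by
  classical
  have : Fintype α := Fintype.ofFinite α
  suffices ∀ s : Finset α, ∃ f : α → Fin n,
      ∀ a ∈ s, ∀ b ∈ s, H.Adj a b → f a ≠ f b by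
    obtain ⟨f, hf⟩ := this Finset.univ
    exact ⟨Coloring.mk f fun hab => hf _ (Finset.mem_univ _) _ (Finset.mem_univ _) hab⟩
  intro s
  induction s using Finset.induction_on with
  | empty => exact ⟨fun v => ⟨0, (Nat.zero_le _).trans_lt (h v)⟩, by simp⟩
  | insert a s _ ih =>
    obtain ⟨f, hf⟩ := ih
    obtain ⟨x, -, hx⟩ : ∃ x ∈ Set.univ, x ∉ f '' H.neighborSet a :=
      Set.exists_mem_notMem_of_ncard_lt_ncard <|
        calc (f '' H.neighborSet a).ncard ≤ (H.neighborSet a).ncard :=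
              Set.ncard_image_le (Set.toFinite _)
          _ < n := h a
          _ = (Set.univ : Set (Fin n)).ncard := by simp
    have hxa : ∀ b, H.Adj a b → x ≠ f b := fun b hb hxb => hx ⟨b, hb, hxb.symm⟩
    refine ⟨Function.update f a x, ?_⟩
    intro p hp q hq hpq
    rcases Finset.mem_insert.1 hp with rfl | hp <;> rcases Finset.mem_insert.1 hq with rfl | hq
    · exact absurd hpq H.irrefl
    · simpa [Function.update_of_ne (H.ne_of_adj hpq).symm] using hxa q hpq
    · simpa [Function.update_of_ne (H.ne_of_adj hpq)] using (hxa p hpq.symm).symm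
    · grind

def square (H : SimpleGraph α) : SimpleGraph α where
  Adj a b := a ≠ b ∧ ∃ p : H.Walk a b, p.length ≤ 2
  symm.symm _ _ := fun ⟨hne, p, hp⟩ => ⟨hne.symm, p.reverse, by simpa using hp⟩
  loopless.irrefl _ h := h.1 rfl

@[simp]
theorem square_adj {H : SimpleGraph α} {a b : α} :
    H.square.Adj a b ↔ a ≠ b ∧ ∃ p : H.Walk a b, p.length ≤ 2 :=
  Iff.rfl

theorem neighborSet_square_subset (H : SimpleGraph α) (v : α) :
    H.square.neighborSet v ⊆ ⋃ u ∈ H.neighborSet v, insert u (H.neighborSet u) := by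
  intro w hw
  obtain ⟨hvw, p, hp⟩ := square_adj.1 hw
  cases p with
  | nil => exact absurd rfl hvw
  | cons hvu q =>
    refine Set.mem_biUnion hvu ?_
    cases q with
    | nil => exact Set.mem_insert _ _
    | cons huw q =>
      cases q with
      | nil => exact Set.mem_insert_of_mem _ huw
      | cons => simp at hp

theorem ncard_neighborSet_square_le [Finite α] {H : SimpleGraph α} {Δ : ℕ}
    (h : ∀ v, (H.neighborSet v).ncard ≤ Δ) (v : α) :
    (H.square.neighborSet v).ncard ≤ Δ * (Δ + 1) :=
  calc (H.square.neighborSet v).ncard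
      ≤ (⋃ u ∈ H.neighborSet v, insert u (H.neighborSet u)).ncard :=
        Set.ncard_le_ncard (neighborSet_square_subset H v)
    _ ≤ (H.neighborSet v).ncard * (Δ + 1) :=
        (Set.toFinite _).ncard_biUnion_le_ncard_mul fun u _ =>
          (Set.ncard_insert_le _ _).trans (Nat.succ_le_succ (h u))
    _ ≤ Δ * (Δ + 1) := Nat.mul_le_mul_right _ (h v)

variable {V : Type*} {G : SimpleGraph V}

theorem ncard_incidenceSet_eq_ncard_neighborSet (v : V) :
    (G.incidenceSet v).ncard = (G.neighborSet v).ncard := by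
  classical
  simpa only [Nat.card_coe_set_eq] using Nat.card_congr (G.incidenceSetEquivNeighborSet v)

theorem ncard_neighborSet_lineGraph_le [Finite V] {d : ℕ}
    (h : ∀ v, (G.neighborSet v).ncard ≤ d) (e : G.edgeSet) :
    (G.lineGraph.neighborSet e).ncard ≤ 2 * d := by
  obtain ⟨⟨a, b⟩, hab⟩ := e
  have hsub : G.lineGraph.neighborSet ⟨s(a, b), hab⟩ ⊆
      Subtype.val ⁻¹' (G.incidenceSet a ∪ G.incidenceSet b) := by
    intro e' he'
    obtain ⟨-, v, hv, hv'⟩ := lineGraph_adj_iff_exists.1 he'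
    rcases Sym2.mem_iff.1 hv with rfl | rfl
    exacts [Or.inl (G.edge_mem_incidenceSet_iff.2 hv'), Or.inr (G.edge_mem_incidenceSet_iff.2 hv')]
  calc (G.lineGraph.neighborSet ⟨s(a, b), hab⟩).ncard
      ≤ (G.incidenceSet a ∪ G.incidenceSet b).ncard :=
        (Set.ncard_le_ncard hsub).trans_eq <| Set.ncard_preimage_of_injective_subset_range
          Subtype.val_injective (by simp [Set.union_subset_iff, incidenceSet_subset])
    _ ≤ (G.incidenceSet a).ncard + (G.incidenceSet b).ncard := Set.ncard_union_le _ _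
    _ ≤ 2 * d := by
        rw [ncard_incidenceSet_eq_ncard_neighborSet, ncard_incidenceSet_eq_ncard_neighborSet]
        linarith [h a, h b]

end SimpleGraph

theorem exists_spread_edge_coloring_general (d k : ℕ)
    {V : Type} [Fintype V] (G : SimpleGraph V)
    (hdeg : ∀ v, (G.neighborSet v).ncard ≤ d)
    (c : G.edgeSet → Fin k) :
    ∃ c₁ : G.edgeSet → Fin (30 * d ^ 3 * k),
      (∀ e, (c₁ e : ℕ) % k = (c e : ℕ)) ∧
      ∀ e₁ e₂ : G.edgeSet, e₁ ≠ e₂ → c₁ e₁ = c₁ e₂ →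
        ∀ p : G.lineGraph.Walk e₁ e₂, 3 ≤ p.length := by
  have hconflict : ∀ e, (G.lineGraph.square.neighborSet e).ncard < 30 * d ^ 3 := by
    intro e
    obtain ⟨⟨a, b⟩, hab⟩ := e
    have hb : b ∈ G.neighborSet a := hab
    have hd : 1 ≤ d := ((Set.ncard_pos (Set.toFinite _)).2 ⟨b, hb⟩).trans_le (hdeg a)
    calc _ ≤ 2 * d * (2 * d + 1) :=
          SimpleGraph.ncard_neighborSet_square_le
            (SimpleGraph.ncard_neighborSet_lineGraph_le hdeg) _
      _ < 30 * d ^ 3 := by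
        nlinarith [Nat.pow_le_pow_right hd (show 1 ≤ 3 by norm_num),
          Nat.pow_le_pow_right hd (show 2 ≤ 3 by norm_num)]
  obtain ⟨g⟩ := G.lineGraph.square.colorable_of_forall_ncard_neighborSet_lt hconflict
  refine ⟨fun e => finProdFinEquiv (g e, c e), fun e => ?_, fun e₁ e₂ hne heq p => ?_⟩
  · simp [finProdFinEquiv_apply_val, Nat.mod_eq_of_lt]
  · by_contra! hp
    exact g.valid (SimpleGraph.square_adj.2 ⟨hne, p, by omega⟩)
      (congrArg Prod.fst (finProdFinEquiv.injective heq))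

/-- Let `G` be a graph with all degrees at most `d` and `c : E(G) → [k]`
an edge coloring.  Then there is an edge coloring `c₁ : E(G) → [30d³k]` with
`c₁(e) ≡ c(e) (mod k)` for every edge `e`, such that any two distinct edges with the same
`c₁`-color are at distance at least `3` in the line graph of `G`. -/
theorem exists_spread_edge_coloring (d k : ℕ) (hd : 1 ≤ d) (hk : 1 ≤ k)
    {V : Type} [Fintype V] (G : SimpleGraph V)
    (hdeg : ∀ v, (G.neighborSet v).ncard ≤ d)
    (c : G.edgeSet → Fin k) :
    ∃ c₁ : G.edgeSet → Fin (30 * d ^ 3 * k),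
      (∀ e, (c₁ e : ℕ) % k = (c e : ℕ)) ∧
      ∀ e₁ e₂ : G.edgeSet, e₁ ≠ e₂ → c₁ e₁ = c₁ e₂ →
        ∀ p : G.lineGraph.Walk e₁ e₂, 3 ≤ p.length :=
  exists_spread_edge_coloring_general d k G hdeg c
end

section
/- (Regularization Lemma) For all positive integers r, k and every real ε > 0 there exists an integer t = t_{r,k,ε} such that for every graph G with all degrees at most d there is a vertex coloring q : V(G) → [t] satisfying: (i) if q(v) = q(w) then either v = w or the distance of v and w in G is at least r+1; and (ii) for every k-coloring g of V(G) there exists a map α : [t] → [k] such that d_var(P_{G,r}[g], P_{G,r}[α ∘ q]) ≤ ε. -/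
open MeasureTheory Filter
open scoped ENNReal

noncomputable section

/-! ### Colored rooted graphs and their isomorphism classes -/

/-- A finite rooted graph whose vertices are colored by elements of `C`. -/
structure PreBall (C : Type) : Type 1 where
  V : Type
  fintypeV : Fintype V
  graph : SimpleGraph V
  root : V
  col : V → C

attribute [instance] PreBall.fintypeV

/-- Isomorphism of colored rooted graphs: a graph isomorphism preserving root and colors. -/
def PreBall.IsIso {C : Type} (B₁ B₂ : PreBall C) : Prop :=
  ∃ e : B₁.graph ≃g B₂.graph, e B₁.root = B₂.root ∧ ∀ v, B₂.col (e v) = B₁.col v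

instance ballSetoid (C : Type) : Setoid (PreBall C) where
  r := PreBall.IsIso
  iseqv := by
    refine ⟨fun B => ⟨(SimpleGraph.Iso.refl : B.graph ≃g B.graph), ?_, fun v => ?_⟩, ?_, ?_⟩
    · rfl
    · rfl
    · rintro B₁ B₂ ⟨e, hr, hc⟩
      refine ⟨e.symm, ?_, fun v => ?_⟩
      · rw [← hr]; exact e.symm_apply_apply _
      · rw [← hc (e.symm v)]
        congr 1
        exact e.apply_symm_apply v
    · rintro B₁ B₂ B₃ ⟨e, hr, hc⟩ ⟨f, hr', hc'⟩
      refine ⟨e.trans f, ?_, fun v => ?_⟩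
      · show f (e B₁.root) = B₃.root
        rw [hr, hr']
      · show B₃.col (f (e v)) = B₁.col v
        rw [hc' (e v), hc v]

/-- The set of isomorphism classes of `C`-colored rooted graphs.  For `C = Fin k`,
the classes of radius at most `r` and degree at most `d` form the finite set `U^{r,k}`. -/
def Ball (C : Type) : Type 1 := Quotient (ballSetoid C)

/-! ### Balls in graphs -/

/-- The set of vertices at distance at most `r` from `x` (the vertex set of `N_{G,r}(x)`). -/
def SimpleGraph.ballSet {V : Type} (G : SimpleGraph V) (x : V) (r : ℕ) : Set V :=
  {y | G.Reachable x y ∧ G.dist x y ≤ r}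

theorem SimpleGraph.ballSet_finite {V : Type} (G : SimpleGraph V)
    (hfin : ∀ v, (G.neighborSet v).Finite) (x : V) : ∀ r : ℕ, (G.ballSet x r).Finite := by
  intro r
  induction r with
  | zero =>
    refine Set.Finite.subset (Set.finite_singleton x) ?_
    rintro y ⟨hre, hd⟩
    obtain ⟨p, hp⟩ := hre.exists_walk_length_eq_dist
    rw [Nat.le_zero.mp hd] at hp
    exact Set.mem_singleton_iff.mpr (SimpleGraph.Walk.eq_of_length_eq_zero hp).symm
  | succ r ih =>
    refine Set.Finite.subset (ih.union (Set.Finite.biUnion ih fun u _ => hfin u)) ?_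
    rintro y ⟨hre, hd⟩
    obtain ⟨p, hp⟩ := hre.exists_walk_length_eq_dist
    have hplen : p.reverse.length ≤ r + 1 := by
      rw [SimpleGraph.Walk.length_reverse, hp]; exact hd
    rcases hq : p.reverse with _ | ⟨hadj, q⟩
    · refine Or.inl ⟨hre, ?_⟩
      have : p.reverse.length = 0 := by rw [hq]; rfl
      rw [SimpleGraph.Walk.length_reverse] at this
      rw [← hp, this]
      exact Nat.zero_le r
    · rename_i u
      rw [hq] at hplen
      have hqlen : q.length ≤ r := by
        have : q.length + 1 ≤ r + 1 := hplen
        omega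
      refine Or.inr (Set.mem_biUnion (?_ : u ∈ G.ballSet x r) ?_)
      · refine ⟨⟨q.reverse⟩, le_trans (SimpleGraph.dist_le q.reverse) ?_⟩
        rw [SimpleGraph.Walk.length_reverse]
        exact hqlen
      · exact hadj.symm

/-- The colored rooted ball `N_{G,r}(x)` as an isomorphism class, where the coloring `g`
is given on the vertices of the ball. -/
def ballAtSub {V C : Type} (G : SimpleGraph V) (r : ℕ) (x : V)
    (hfin : (G.ballSet x r).Finite) (g : ↥(G.ballSet x r) → C) : Ball C :=
  Quotient.mk (ballSetoid C)
    { V := ↥(G.ballSet x r)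
      fintypeV := hfin.fintype
      graph := G.induce (G.ballSet x r)
      root := ⟨x, SimpleGraph.Reachable.refl x, by rw [SimpleGraph.dist_self]; exact Nat.zero_le r⟩
      col := g }

/-- The `c`-colored rooted ball of radius `r` around `x` in `G`, as a point of `Ball C`. -/
def ballAt {V C : Type} (G : SimpleGraph V) (c : V → C) (r : ℕ) (x : V)
    (hfin : (G.ballSet x r).Finite) : Ball C :=
  ballAtSub G r x hfin fun v => c v.1

/-- Colored ball of radius `r` around `x` in a finite graph. -/
def finBallAt {V C : Type} [Fintype V] (G : SimpleGraph V) (c : V → C) (r : ℕ) (x : V) :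
    Ball C :=
  ballAt G c r x (Set.toFinite _)

/-- `P_{G,r}[c]` : the distribution of the `c`-colored `r`-ball around a uniformly
random vertex of the finite graph `G`. -/
def finProb {V C : Type} [Fintype V] (G : SimpleGraph V) (c : V → C) (r : ℕ) :
    Ball C → ℝ :=
  fun β => ({x : V | finBallAt G c r x = β}.ncard : ℝ) / (Fintype.card V : ℝ)

/-- The total mass that a (finitely supported) distribution on colored balls puts
on a set `A`. -/
def ballMass {C : Type} (p : Ball C → ℝ) (A : Set (Ball C)) : ℝ :=
  ∑' b : A, p b

/-- Total variation distance between two distributions on colored balls: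
`d_var(p,q) = sup_A |p(A) - q(A)|`. -/
def dvar {C : Type} (p q : Ball C → ℝ) : ℝ :=
  ⨆ A : Set (Ball C), |ballMass p A - ballMass q A|

/-- Hausdorff distance between two sets of distributions, with respect to `dvar`. -/
def hausd {C : Type} (Q₁ Q₂ : Set (Ball C → ℝ)) : ℝ :=
  max (⨆ p ∈ Q₁, ⨅ q ∈ Q₂, dvar p q) (⨆ p ∈ Q₂, ⨅ q ∈ Q₁, dvar p q)

/-- Closure of a set of distributions on colored balls in the total variation distance. -/
def tvClosure {C : Type} (Q : Set (Ball C → ℝ)) : Set (Ball C → ℝ) :=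
  {p | ∀ ε : ℝ, 0 < ε → ∃ q ∈ Q, dvar p q ≤ ε}

/-- `Q_{G,r,k}`: the set of local statistics of all `k`-colorings of the finite graph `G`. -/
def finQ {V : Type} [Fintype V] (G : SimpleGraph V) (r k : ℕ) : Set (Ball (Fin k) → ℝ) :=
  {p | ∃ c : V → Fin k, p = finProb G c r}

/-- A finite graph with all degrees at most `d`. -/
structure FinGraph (d : ℕ) where
  n : ℕ
  graph : SimpleGraph (Fin n)
  deg_le : ∀ v, (graph.neighborSet v).ncard ≤ d

/-- The quotient set `Q_{G,r,k}` of a finite bounded-degree graph. -/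
def FinGraph.Q {d : ℕ} (G : FinGraph d) (r k : ℕ) : Set (Ball (Fin k) → ℝ) :=
  finQ G.graph r k

/-- A sequence of sets of distributions converges in the Hausdorff distance. -/
def HausdTendsto {C : Type} (Q : ℕ → Set (Ball C → ℝ)) (L : Set (Ball C → ℝ)) : Prop :=
  Filter.Tendsto (fun n => hausd (Q n) L) Filter.atTop (nhds 0)

/-- Local-global convergence of a sequence of finite graphs of degree at most `d`:
for all `r, k ≥ 1` the quotient sets `Q_{G_n,r,k}` converge in the Hausdorff distance
(inside the compact space of probability distributions on `U^{r,k}` with the total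
variation distance). -/
def LocGlobConv {d : ℕ} (G : ℕ → FinGraph d) : Prop :=
  ∀ r k : ℕ, 1 ≤ r → 1 ≤ k → ∃ L : Set (Ball (Fin k) → ℝ), HausdTendsto (fun n => (G n).Q r k) L

/-!
Colouring the `r`-th power of `G` greedily with `(d+1)^r` colours separates any two vertices at
distance at most `r`. Every `r`-ball of `G` has at most `(d+1)^r` vertices, so all statistics
`P_{G,r}[g]` are supported on one finite set `S` of coloured balls that does not depend on `G`.
Rounding their values down to multiples of `1/M` sorts the `k`-colourings of `G` into at most
`(M+1)^|S|` classes, within each of which the statistics are `|S|/M`-close in total variation.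
Recording at each vertex, next to its greedy colour, the value there of one fixed representative
of every class makes each representative of the form `α ∘ q`.
-/
namespace SimpleGraph

variable {V : Type} (G : SimpleGraph V)

theorem mem_ballSet_iff {x y : V} {r : ℕ} :
    y ∈ G.ballSet x r ↔ ∃ p : G.Walk x y, p.length ≤ r := by
  refine ⟨fun ⟨hxy, hd⟩ => ?_, fun ⟨p, hp⟩ => ⟨p.reachable, (dist_le p).trans hp⟩⟩
  obtain ⟨p, hp⟩ := hxy.exists_walk_length_eq_dist
  exact ⟨p, hp ▸ hd⟩

theorem ballSet_succ_subset (x : V) (r : ℕ) :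
    G.ballSet x (r + 1) ⊆ insert x (⋃ u ∈ G.neighborSet x, G.ballSet u r) := by
  intro y hy
  obtain ⟨p, hp⟩ := (G.mem_ballSet_iff).1 hy
  cases p with
  | nil => exact Set.mem_insert _ _
  | cons hxu p =>
    refine Set.mem_insert_of_mem _ (Set.mem_biUnion hxu ((G.mem_ballSet_iff).2 ⟨p, ?_⟩))
    simpa using hp

theorem ncard_ballSet_le [Finite V] {d : ℕ} (hdeg : ∀ v, (G.neighborSet v).ncard ≤ d)
    (r : ℕ) (x : V) : (G.ballSet x r).ncard ≤ (d + 1) ^ r := by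
  induction r generalizing x with
  | zero =>
    have : G.ballSet x 0 ⊆ {x} := fun y hy => by
      obtain ⟨p, hp⟩ := (G.mem_ballSet_iff).1 hy
      exact (Walk.eq_of_length_eq_zero (Nat.le_zero.1 hp)).symm
    simpa using Set.ncard_le_ncard this
  | succ r ih =>
    set N := (Set.toFinite (G.neighborSet x)).toFinset
    have hunion : (⋃ u ∈ G.neighborSet x, G.ballSet u r) = ⋃ u ∈ N, G.ballSet u r := by
      simp [N]
    have hN : N.card ≤ d := by
      rw [← Set.ncard_eq_toFinset_card]; exact hdeg x
    have hpow : 1 ≤ (d + 1) ^ r := Nat.one_le_pow _ _ d.succ_pos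
    calc (G.ballSet x (r + 1)).ncard
        ≤ (⋃ u ∈ G.neighborSet x, G.ballSet u r).ncard + 1 :=
          (Set.ncard_le_ncard (G.ballSet_succ_subset x r)).trans (Set.ncard_insert_le _ _)
      _ ≤ N.card * (d + 1) ^ r + 1 := by
          rw [hunion]
          gcongr
          calc (⋃ u ∈ N, G.ballSet u r).ncard ≤ ∑ u ∈ N, (G.ballSet u r).ncard :=
                N.set_ncard_biUnion_le _
            _ ≤ N.card * (d + 1) ^ r := by simpa using N.sum_le_card_nsmul _ _ fun u _ => ih u
      _ ≤ (d + 1) ^ (r + 1) := by rw [pow_succ]; nlinarith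

def power (r : ℕ) : SimpleGraph V where
  Adj v w := v ≠ w ∧ w ∈ G.ballSet v r
  symm := ⟨fun v w ⟨hne, hw⟩ => by
    obtain ⟨p, hp⟩ := (G.mem_ballSet_iff).1 hw
    exact ⟨hne.symm, (G.mem_ballSet_iff).2 ⟨p.reverse, by simpa using hp⟩⟩⟩
  loopless := ⟨fun _ h => h.1 rfl⟩

theorem ncard_neighborSet_power_lt [Finite V] {d : ℕ} (hdeg : ∀ v, (G.neighborSet v).ncard ≤ d)
    (r : ℕ) (v : V) : ((G.power r).neighborSet v).ncard < (d + 1) ^ r := by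
  have hv : v ∈ G.ballSet v r := (G.mem_ballSet_iff).2 ⟨Walk.nil, Nat.zero_le r⟩
  have hsub : (G.power r).neighborSet v ⊆ G.ballSet v r \ {v} := fun w hw => ⟨hw.2, hw.1.symm⟩
  calc ((G.power r).neighborSet v).ncard ≤ (G.ballSet v r \ {v}).ncard := Set.ncard_le_ncard hsub
    _ < (G.ballSet v r).ncard := Set.ncard_sdiff_singleton_lt_of_mem hv
    _ ≤ (d + 1) ^ r := G.ncard_ballSet_le hdeg r v

open Finset in
theorem colorable_of_ncard_neighborSet_lt [Finite V] {s : ℕ}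
    (h : ∀ v, (G.neighborSet v).ncard < s) : G.Colorable s := by
  classical
  have := Fintype.ofFinite V
  rcases isEmpty_or_nonempty V with hV | hV
  · exact .of_isEmpty s
  obtain ⟨v₀⟩ := hV
  have : NeZero s := ⟨by have := h v₀; omega⟩
  suffices ∀ A : Finset V, ∃ c : V → Fin s, ∀ v ∈ A, ∀ w ∈ A, G.Adj v w → c v ≠ c w by
    obtain ⟨c, hc⟩ := this univ
    exact ⟨Coloring.mk c fun hvw => hc _ (mem_univ _) _ (mem_univ _) hvw⟩
  intro A
  induction A using Finset.induction_on with
  | empty => exact ⟨0, by simp⟩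
  | @insert a A ha ih =>
    obtain ⟨c, hc⟩ := ih
    have hused : (A.filter (G.Adj a) |>.image c).card < (univ : Finset (Fin s)).card := by
      calc (A.filter (G.Adj a) |>.image c).card ≤ (A.filter (G.Adj a)).card := card_image_le
        _ ≤ (G.neighborSet a).ncard := by
            rw [Set.ncard_eq_toFinset_card']
            exact card_le_card fun u hu => by simpa using (mem_filter.1 hu).2
        _ < (univ : Finset (Fin s)).card := by simpa using h a
    obtain ⟨f, -, hf⟩ := exists_mem_notMem_of_card_lt_card hused
    have hfree : ∀ w ∈ A, G.Adj a w → f ≠ c w := fun w hw haw hfw =>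
      hf (mem_image.2 ⟨w, mem_filter.2 ⟨hw, haw⟩, hfw.symm⟩)
    refine ⟨Function.update c a f, fun v hv w hw hvw => ?_⟩
    rcases mem_insert.1 hv with rfl | hvA <;> rcases mem_insert.1 hw with rfl | hwA
    · exact (G.irrefl hvw).elim
    · simpa [Function.update_of_ne (G.ne_of_adj hvw).symm] using hfree w hwA hvw
    · simpa [Function.update_of_ne (G.ne_of_adj hvw)] using (hfree v hvA hvw.symm).symm
    · simpa [Function.update_of_ne (ne_of_mem_of_not_mem hvA ha),
        Function.update_of_ne (ne_of_mem_of_not_mem hwA ha)] using hc v hvA w hwA hvw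

theorem exists_separating_coloring [Fintype V] {d : ℕ} (hdeg : ∀ v, (G.neighborSet v).ncard ≤ d)
    (r : ℕ) : ∃ q : V → Fin ((d + 1) ^ r),
      ∀ v w, q v = q w → v = w ∨ ∀ p : G.Walk v w, r + 1 ≤ p.length := by
  obtain ⟨c⟩ := (G.power r).colorable_of_ncard_neighborSet_lt (G.ncard_neighborSet_power_lt hdeg r)
  refine ⟨c, fun v w hvw => or_iff_not_imp_left.2 fun hne p => ?_⟩
  by_contra! hp
  exact c.valid ⟨hne, (G.mem_ballSet_iff).2 ⟨p, Nat.le_of_lt_succ hp⟩⟩ hvw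

end SimpleGraph

def smallBalls (C : Type) (B : ℕ) : Set (Ball C) :=
  Set.range fun R : Σ n : Fin (B + 1), SimpleGraph (Fin n) × Fin n × (Fin n → C) =>
    Quotient.mk (ballSetoid C) ⟨Fin R.1, inferInstance, R.2.1, R.2.2.1, R.2.2.2⟩

theorem finite_smallBalls (C : Type) [Finite C] (B : ℕ) : (smallBalls C B).Finite :=
  Set.finite_range _

theorem mk_mem_smallBalls {C : Type} {B : ℕ} (P : PreBall C) (h : Nat.card P.V ≤ B) :
    Quotient.mk (ballSetoid C) P ∈ smallBalls C B := by
  let e : P.V ≃ Fin (Nat.card P.V) := Finite.equivFin P.V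
  refine ⟨⟨⟨Nat.card P.V, Nat.lt_succ_of_le h⟩, P.graph.comap e.symm, e P.root, P.col ∘ e.symm⟩,
    Quotient.sound ⟨⟨e.symm, Iff.rfl⟩, e.symm_apply_apply _, fun _ => rfl⟩⟩

section Statistics

variable {V C : Type} [Fintype V] (G : SimpleGraph V) (c : V → C) (r : ℕ)

theorem finBallAt_mem_smallBalls {d : ℕ} (hdeg : ∀ v, (G.neighborSet v).ncard ≤ d) (x : V) :
    finBallAt G c r x ∈ smallBalls C ((d + 1) ^ r) :=
  mk_mem_smallBalls _ <| (Nat.card_coe_set_eq _).trans_le (G.ncard_ballSet_le hdeg r x)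

theorem finProb_eq_zero_of_notMem_smallBalls {d : ℕ} (hdeg : ∀ v, (G.neighborSet v).ncard ≤ d)
    {β : Ball C} (hβ : β ∉ smallBalls C ((d + 1) ^ r)) : finProb G c r β = 0 := by
  have : {x : V | finBallAt G c r x = β} = ∅ :=
    Set.eq_empty_of_forall_notMem fun x hx => hβ (hx ▸ finBallAt_mem_smallBalls G c r hdeg x)
  simp [finProb, this]

theorem finProb_mem_Icc (β : Ball C) : finProb G c r β ∈ Set.Icc 0 1 := by
  refine ⟨by unfold finProb; positivity, div_le_one_of_le₀ ?_ (Nat.cast_nonneg _)⟩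
  exact_mod_cast (Set.ncard_le_card _).trans_eq Nat.card_eq_fintype_card

end Statistics

theorem dvar_le_card_mul {C : Type} {p q : Ball C → ℝ} (S : Finset (Ball C))
    (hp : ∀ b ∉ S, p b = 0) (hq : ∀ b ∉ S, q b = 0) {δ : ℝ} (hpq : ∀ b ∈ S, |p b - q b| ≤ δ) :
    dvar p q ≤ S.card * δ := by
  have hmass : ∀ f : Ball C → ℝ, (∀ b ∉ S, f b = 0) →
      ∀ A, ballMass f A = ∑ b ∈ S, A.indicator f b := fun f hf A => by
    rw [ballMass, tsum_subtype, tsum_eq_sum fun b hb => by simp [hf b hb]]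
  refine ciSup_le fun A => ?_
  rw [hmass p hp, hmass q hq, ← Finset.sum_sub_distrib]
  calc |∑ b ∈ S, (A.indicator p b - A.indicator q b)|
      ≤ ∑ b ∈ S, |p b - q b| := by
        refine (Finset.abs_sum_le_sum_abs _ _).trans (Finset.sum_le_sum fun b _ => ?_)
        by_cases hb : b ∈ A <;> simp [hb]
    _ ≤ S.card * δ := by simpa using Finset.sum_le_card_nsmul S _ δ hpq

def quantize (M : ℕ) (x : ℝ) : Fin (M + 1) :=
  ⟨min ⌊x * M⌋₊ M, Nat.lt_succ_of_le (min_le_right _ _)⟩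

theorem abs_sub_le_of_quantize_eq {M : ℕ} (hM : 0 < M) {x y : ℝ} (hx : x ∈ Set.Icc 0 1)
    (hy : y ∈ Set.Icc 0 1) (h : quantize M x = quantize M y) : |x - y| ≤ 1 / M := by
  have hM' : (0 : ℝ) < M := Nat.cast_pos.2 hM
  have hmin : ∀ z ∈ Set.Icc (0 : ℝ) 1, min ⌊z * M⌋₊ M = ⌊z * M⌋₊ := fun z hz =>
    min_eq_left (Nat.floor_le_of_le (by nlinarith [hz.2]))
  have hfloor : (⌊x * M⌋₊ : ℝ) = ⌊y * M⌋₊ := by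
    have := congrArg Fin.val h
    simp only [quantize, hmin x hx, hmin y hy] at this
    rw [this]
  have := Nat.floor_le (mul_nonneg hx.1 hM'.le)
  have := Nat.floor_le (mul_nonneg hy.1 hM'.le)
  have := Nat.lt_floor_add_one (x * M)
  have := Nat.lt_floor_add_one (y * M)
  rw [abs_sub_le_iff, le_div_iff₀ hM', le_div_iff₀ hM']
  constructor <;> linarith

theorem exists_forall_exists_comp_eq {V C T : Type*} [Nonempty C] (f : (V → C) → T) :
    ∃ q : V → T → C, ∀ g, ∃ α : (T → C) → C, f (α ∘ q) = f g :=
  ⟨fun v c => Function.invFun f c v, fun g => ⟨fun h => h (f g), Function.invFun_eq ⟨g, rfl⟩⟩⟩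

theorem regularization_general (d : ℕ) (r k : ℕ) (hk : 1 ≤ k)
    (ε : ℝ) (hε : 0 < ε) :
    ∃ t : ℕ, ∀ (V : Type) [Fintype V] (G : SimpleGraph V),
      (∀ v, (G.neighborSet v).ncard ≤ d) →
      ∃ q : V → Fin t,
        (∀ v w : V, q v = q w → v = w ∨ ∀ p : G.Walk v w, r + 1 ≤ p.length) ∧
        ∀ g : V → Fin k, ∃ α : Fin t → Fin k,
          dvar (finProb G g r) (finProb G (fun v => α (q v)) r) ≤ ε := by
  classical
  have : Nonempty (Fin k) := ⟨⟨0, hk⟩⟩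
  set S := (finite_smallBalls (Fin k) ((d + 1) ^ r)).toFinset
  obtain ⟨M, hM⟩ := exists_nat_gt ((S.card : ℝ) / ε)
  have hM0 : (0 : ℝ) < M := (div_nonneg (Nat.cast_nonneg _) hε.le).trans_lt hM
  have hSM : (S.card : ℝ) * (1 / M) ≤ ε := by
    rw [div_lt_iff₀ hε] at hM
    rw [mul_one_div, div_le_iff₀ hM0]
    linarith
  let Code := Fin ((d + 1) ^ r) × ((S → Fin (M + 1)) → Fin k)
  refine ⟨Fintype.card Code, fun V _ G hdeg => ?_⟩
  obtain ⟨q₀, hq₀⟩ := G.exists_separating_coloring hdeg r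
  obtain ⟨q₁, hq₁⟩ := exists_forall_exists_comp_eq
    fun (g : V → Fin k) (b : S) => quantize M (finProb G g r b)
  let e := Fintype.equivFin Code
  refine ⟨fun v => e (q₀ v, q₁ v), fun v w hvw => hq₀ v w (congrArg Prod.fst (e.injective hvw)),
    fun g => ?_⟩
  obtain ⟨α, hα⟩ := hq₁ g
  refine ⟨fun j => α (e.symm j).2, ?_⟩
  simp only [Equiv.symm_apply_apply]
  have hS : ∀ c : V → Fin k, ∀ b ∉ S, finProb G c r b = 0 := fun c b hb =>
    finProb_eq_zero_of_notMem_smallBalls G c r hdeg (by simpa [S] using hb)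
  refine (dvar_le_card_mul S (hS _) (hS _) fun b hb => ?_).trans hSM
  exact abs_sub_le_of_quantize_eq (Nat.cast_pos.1 hM0) (finProb_mem_Icc G g r b)
    (finProb_mem_Icc G _ r b) (congrFun hα ⟨b, hb⟩).symm

/-- **Regularization lemma.** For all `r, k ≥ 1` and `ε > 0` there is
`t = t_{r,k,ε}` such that every graph `G` of maximum degree at most `d` has a vertex
coloring `q` with `t` colors such that: (i) vertices with the same `q`-color coincide or
are at distance at least `r+1` in `G`; (ii) for every `k`-coloring `g` of `V(G)` there is
`α : [t] → [k]` with `d_var(P_{G,r}[g], P_{G,r}[α ∘ q]) ≤ ε`. -/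
theorem regularization (d : ℕ) (hd : 1 ≤ d) (r k : ℕ) (hr : 1 ≤ r) (hk : 1 ≤ k)
    (ε : ℝ) (hε : 0 < ε) :
    ∃ t : ℕ, ∀ (V : Type) [Fintype V] (G : SimpleGraph V),
      (∀ v, (G.neighborSet v).ncard ≤ d) →
      ∃ q : V → Fin t,
        (∀ v w : V, q v = q w → v = w ∨ ∀ p : G.Walk v w, r + 1 ≤ p.length) ∧
        ∀ g : V → Fin k, ∃ α : Fin t → Fin k,
          dvar (finProb G g r) (finProb G (fun v => α (q v)) r) ≤ ε :=
  regularization_general d r k hk ε hε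
end
end

section
/- If there exists a local isomorphism φ : V(𝒢₁) → V(𝒢₂) between two graphings 𝒢₁ and 𝒢₂, then 𝒢₁ and 𝒢₂ are locally equivalent, and 𝒢₂ ≺ 𝒢₁ (that is, the closure of Q_{𝒢₂,r,k} is contained in the closure of Q_{𝒢₁,r,k} for every r, k ≥ 1). -/
open MeasureTheory Filter
open scoped ENNReal

noncomputable section

/-! ### Graphings -/

/-- A graphing: a bounded-degree Borel graph on a Polish probability space satisfying the
measure-preservation (involution invariance) condition
`∫_A e(x,B) dν(x) = ∫_B e(x,A) dν(x)`. -/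
structure Graphing (d : ℕ) : Type 1 where
  X : Type
  topX : TopologicalSpace X
  polishX : @PolishSpace X topX
  mX : MeasurableSpace X
  borelX : @BorelSpace X topX mX
  ν : @Measure X mX
  probν : IsProbabilityMeasure ν
  graph : SimpleGraph X
  edge_borel : MeasurableSet {p : X × X | graph.Adj p.1 p.2}
  nbr_finite : ∀ x, (graph.neighborSet x).Finite
  deg_le : ∀ x, (graph.neighborSet x).ncard ≤ d
  mpres : ∀ A B : Set X, MeasurableSet A → MeasurableSet B →
    ∫⁻ x in A, ((graph.neighborSet x ∩ B).ncard : ℝ≥0∞) ∂ν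
      = ∫⁻ x in B, ((graph.neighborSet x ∩ A).ncard : ℝ≥0∞) ∂ν

attribute [instance] Graphing.topX Graphing.polishX Graphing.mX Graphing.borelX Graphing.probν

/-- The colored rooted `r`-ball of the graphing at `x`. -/
def Graphing.ballCl {d : ℕ} (𝒢 : Graphing d) {C : Type} (c : 𝒢.X → C) (r : ℕ) (x : 𝒢.X) :
    Ball C :=
  ballAt 𝒢.graph c r x (𝒢.graph.ballSet_finite 𝒢.nbr_finite x r)

/-- `P_{𝒢,r}[c]`: the distribution of the `c`-colored `r`-ball around a `ν`-random
point of the graphing `𝒢`. -/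
def Graphing.P {d : ℕ} (𝒢 : Graphing d) {C : Type} (c : 𝒢.X → C) (r : ℕ) : Ball C → ℝ :=
  fun β => (𝒢.ν {x | 𝒢.ballCl c r x = β}).toReal

/-- `Q_{𝒢,r,k}`: the set of local statistics of all measurable `k`-colorings of `𝒢`. -/
def Graphing.Q {d : ℕ} (𝒢 : Graphing d) (r k : ℕ) : Set (Ball (Fin k) → ℝ) :=
  {p | ∃ c : 𝒢.X → Fin k, Measurable c ∧ p = 𝒢.P c r}

/-- Two graphings are locally equivalent if the distributions of (uncolored) rooted
`r`-balls of a random point agree for every `r`. -/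
def LocallyEquiv {d : ℕ} (𝒢₁ 𝒢₂ : Graphing d) : Prop :=
  ∀ r : ℕ, 𝒢₁.P (fun _ => (0 : Fin 1)) r = 𝒢₂.P (fun _ => (0 : Fin 1)) r

/-- The local-global partial order: `𝒢₁ ≺ 𝒢₂` iff `closure (Q_{𝒢₁,r,k}) ⊆ closure (Q_{𝒢₂,r,k})`
for all `r, k ≥ 1`. -/
def Graphing.Prec {d : ℕ} (𝒢₁ 𝒢₂ : Graphing d) : Prop :=
  ∀ r k : ℕ, 1 ≤ r → 1 ≤ k → tvClosure (𝒢₁.Q r k) ⊆ tvClosure (𝒢₂.Q r k)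

/-- A local isomorphism of graphings: a measure-preserving map which restricts to an
isomorphism between the connected component of any point and the connected component
of its image. -/
structure IsLocalIso {d : ℕ} (𝒢₁ 𝒢₂ : Graphing d) (φ : 𝒢₁.X → 𝒢₂.X) : Prop where
  measurePreserving : MeasurePreserving φ 𝒢₁.ν 𝒢₂.ν
  adj_map : ∀ x y, 𝒢₁.graph.Adj x y → 𝒢₂.graph.Adj (φ x) (φ y)
  comp_inj : ∀ x y, 𝒢₁.graph.Reachable x y → φ x = φ y → x = y
  comp_surj : ∀ x z, 𝒢₂.graph.Reachable (φ x) z → ∃ y, 𝒢₁.graph.Reachable x y ∧ φ y = z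
  adj_reflect : ∀ x y, 𝒢₁.graph.Reachable x y → 𝒢₂.graph.Adj (φ x) (φ y) → 𝒢₁.graph.Adj x y

/-!
A local isomorphism `φ` preserves distances inside components, so it maps the colored `r`-ball
around `x` (colored by `c ∘ φ`) isomorphically onto the colored `r`-ball around `φ x`. Hence the
set of points of `𝒢₁` with a given ball type is the `φ`-preimage of the corresponding set in `𝒢₂`.
These sets need not be measurable, but a measure-preserving map out of a Polish space preserves
outer measures: by inner regularity, the complement of a measurable hull of `φ⁻¹' s` is
exhausted by compact sets, whose images are closed and avoid `s`. So `P_{𝒢₁,r}[c ∘ φ] = P_{𝒢₂,r}[c]`;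
constant colorings give local equivalence, and pulling back measurable colorings along `φ`
gives `Q_{𝒢₂,r,k} ⊆ Q_{𝒢₁,r,k}`.
-/

structure SimpleGraph.IsComponentwiseIso {V W : Type*} (G : SimpleGraph V) (H : SimpleGraph W)
    (φ : V → W) : Prop where
  map_adj : ∀ x y, G.Adj x y → H.Adj (φ x) (φ y)
  eq_of_reachable : ∀ x y, G.Reachable x y → φ x = φ y → x = y
  surj_of_reachable : ∀ x z, H.Reachable (φ x) z → ∃ y, G.Reachable x y ∧ φ y = z
  adj_of_reachable : ∀ x y, G.Reachable x y → H.Adj (φ x) (φ y) → G.Adj x y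

namespace SimpleGraph.IsComponentwiseIso

section

variable {V W : Type*} {G : SimpleGraph V} {H : SimpleGraph W} {φ : V → W}

def toHom (h : G.IsComponentwiseIso H φ) : G →g H :=
  ⟨φ, fun {x y} hxy => h.map_adj x y hxy⟩

theorem exists_walk_lift (h : G.IsComponentwiseIso H φ) {a b : W} (w : H.Walk a b) (x : V)
    (hx : φ x = a) : ∃ (y : V) (w' : G.Walk x y), φ y = b ∧ w'.length = w.length := by
  induction w generalizing x with
  | nil => exact ⟨x, .nil, hx, rfl⟩
  | @cons a u b hau w ih =>
    subst hx
    obtain ⟨y₁, hxy₁, rfl⟩ := h.surj_of_reachable x u hau.reachable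
    obtain ⟨y, w', hy, hlen⟩ := ih y₁ rfl
    exact ⟨y, .cons (h.adj_of_reachable x y₁ hxy₁ hau) w', hy, by simp [hlen]⟩

theorem dist_map (h : G.IsComponentwiseIso H φ) {x y : V} (hxy : G.Reachable x y) :
    H.dist (φ x) (φ y) = G.dist x y := by
  apply le_antisymm
  · obtain ⟨p, hp⟩ := hxy.exists_walk_length_eq_dist
    calc H.dist (φ x) (φ y) ≤ (p.map h.toHom).length := dist_le _
      _ = G.dist x y := by rw [Walk.length_map, hp]
  · obtain ⟨q, hq⟩ := (hxy.map h.toHom).exists_walk_length_eq_dist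
    obtain ⟨y', w', hy', hlen⟩ := h.exists_walk_lift q x rfl
    obtain rfl : y' = y := h.eq_of_reachable y' y (w'.reachable.symm.trans hxy) hy'
    calc G.dist x y' ≤ w'.length := dist_le w'
      _ = H.dist (φ x) (φ y') := by rw [hlen, hq]; rfl

end

section

variable {V W : Type} {G : SimpleGraph V} {H : SimpleGraph W} {φ : V → W}

theorem bijOn_ballSet (h : G.IsComponentwiseIso H φ) (x : V) (r : ℕ) :
    Set.BijOn φ (G.ballSet x r) (H.ballSet (φ x) r) := by
  refine ⟨fun y ⟨hxy, hr⟩ => ⟨hxy.map h.toHom, (h.dist_map hxy).trans_le hr⟩,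
    fun y ⟨hxy, _⟩ z ⟨hxz, _⟩ => h.eq_of_reachable y z (hxy.symm.trans hxz), ?_⟩
  rintro z ⟨hxz, hr⟩
  obtain ⟨y, hxy, rfl⟩ := h.surj_of_reachable x z hxz
  exact ⟨y, ⟨hxy, (h.dist_map hxy).symm.trans_le hr⟩, rfl⟩

theorem ballAt_comp {C : Type} (h : G.IsComponentwiseIso H φ) (c : W → C) (r : ℕ) (x : V)
    (hG : (G.ballSet x r).Finite) (hH : (H.ballSet (φ x) r).Finite) :
    ballAt G (c ∘ φ) r x hG = ballAt H c r (φ x) hH := by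
  apply Quotient.sound
  refine ⟨⟨(h.bijOn_ballSet x r).equiv φ, fun {u v} => ?_⟩, rfl, fun _ => rfl⟩
  exact ⟨h.adj_of_reachable u v (u.2.1.symm.trans v.2.1), h.map_adj u v⟩

end

end SimpleGraph.IsComponentwiseIso

namespace MeasureTheory.MeasurePreserving

variable {X Y : Type*} [MeasurableSpace X] [TopologicalSpace Y] [MeasurableSpace Y]
  {μ : Measure X} {ν : Measure Y} [IsFiniteMeasure μ] {f : X → Y}

theorem measure_le_measure_preimage_of_continuous [TopologicalSpace X] [PolishSpace X]
    [BorelSpace X] [T2Space Y] [OpensMeasurableSpace Y] (hf : MeasurePreserving f μ ν)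
    (hfc : Continuous f) (s : Set Y) : ν s ≤ μ (f ⁻¹' s) := by
  set W := toMeasurable μ (f ⁻¹' s)
  have hW : MeasurableSet W := measurableSet_toMeasurable μ _
  refine ENNReal.le_of_forall_pos_le_add fun ε hε _ => ?_
  obtain ⟨K, hKW, hK, hKε⟩ := hW.compl.exists_isCompact_sdiff_lt (measure_ne_top μ _)
    (ENNReal.coe_ne_zero.mpr hε.ne')
  have hfK : MeasurableSet (f '' K) := ((hK.image hfc).isClosed).measurableSet
  have hsK : s ⊆ (f '' K)ᶜ := by
    rintro y hy ⟨x, hxK, rfl⟩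
    exact hKW hxK (subset_toMeasurable μ _ hy)
  have hKc : Kᶜ ⊆ W ∪ Wᶜ \ K := fun x hx => (em (x ∈ W)).imp id fun hxW => ⟨hxW, hx⟩
  calc ν s ≤ ν (f '' K)ᶜ := measure_mono hsK
    _ = μ (f ⁻¹' (f '' K)ᶜ) := (hf.measure_preimage hfK.compl.nullMeasurableSet).symm
    _ ≤ μ Kᶜ := measure_mono (Set.compl_subset_compl.mpr (Set.subset_preimage_image f K))
    _ ≤ μ W + μ (Wᶜ \ K) := (measure_mono hKc).trans (measure_union_le _ _)
    _ ≤ μ (f ⁻¹' s) + ε := by rw [measure_toMeasurable]; gcongr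

theorem measure_preimage_of_polishSpace [t : TopologicalSpace X] [PolishSpace X] [BorelSpace X]
    [SecondCountableTopology Y] [T2Space Y] [OpensMeasurableSpace Y]
    (hf : MeasurePreserving f μ ν) (s : Set Y) : μ (f ⁻¹' s) = ν s := by
  refine le_antisymm ((Measure.le_map_apply hf.measurable.aemeasurable s).trans_eq
    (by rw [hf.map_eq])) ?_
  obtain ⟨τ, hτ, hfc, hτPolish⟩ := hf.measurable.exists_continuous
  have hBorel : @BorelSpace X τ _ :=
    ⟨(@BorelSpace.measurable_eq X t _ _).trans (borel_eq_borel_of_le hτPolish ‹_› hτ).symm⟩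
  exact @measure_le_measure_preimage_of_continuous X Y _ _ _ μ ν _ f τ hτPolish hBorel _ _ hf hfc s

end MeasureTheory.MeasurePreserving

theorem tvClosure_mono {C : Type} {Q Q' : Set (Ball C → ℝ)} (hQ : Q ⊆ Q') :
    tvClosure Q ⊆ tvClosure Q' := fun _ hp ε hε =>
  let ⟨q, hq, hpq⟩ := hp ε hε
  ⟨q, hQ hq, hpq⟩

namespace IsLocalIso

variable {d : ℕ} {𝒢₁ 𝒢₂ : Graphing d} {φ : 𝒢₁.X → 𝒢₂.X}

theorem isComponentwiseIso (h : IsLocalIso 𝒢₁ 𝒢₂ φ) :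
    𝒢₁.graph.IsComponentwiseIso 𝒢₂.graph φ :=
  ⟨h.adj_map, h.comp_inj, h.comp_surj, h.adj_reflect⟩

theorem P_comp (h : IsLocalIso 𝒢₁ 𝒢₂ φ) {C : Type} (c : 𝒢₂.X → C) (r : ℕ) :
    𝒢₁.P (c ∘ φ) r = 𝒢₂.P c r := by
  funext β
  have hball : {x | 𝒢₁.ballCl (c ∘ φ) r x = β} = φ ⁻¹' {y | 𝒢₂.ballCl c r y = β} := by
    ext x
    exact Iff.of_eq (congrArg (· = β) (h.isComponentwiseIso.ballAt_comp c r x _ _))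
  simp only [Graphing.P, hball, h.measurePreserving.measure_preimage_of_polishSpace]

theorem Q_subset (h : IsLocalIso 𝒢₁ 𝒢₂ φ) (r k : ℕ) : 𝒢₂.Q r k ⊆ 𝒢₁.Q r k := by
  rintro _ ⟨c, hc, rfl⟩
  exact ⟨c ∘ φ, hc.comp h.measurePreserving.measurable, (h.P_comp c r).symm⟩

end IsLocalIso

/-- A local isomorphism `φ : 𝒢₁ → 𝒢₂` implies that `𝒢₁` and `𝒢₂` are
locally equivalent, and `𝒢₂ ≺ 𝒢₁`. -/
theorem localIso_implies_localEquiv_and_prec (d : ℕ) (𝒢₁ 𝒢₂ : Graphing d)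
    (φ : 𝒢₁.X → 𝒢₂.X) (h : IsLocalIso 𝒢₁ 𝒢₂ φ) :
    LocallyEquiv 𝒢₁ 𝒢₂ ∧ Graphing.Prec 𝒢₂ 𝒢₁ :=
  ⟨fun r => h.P_comp (fun _ => (0 : Fin 1)) r, fun r k _ _ => tvClosure_mono (h.Q_subset r k)⟩
end
end

section
/- Let 𝒢 be a graphing on (X, ν) and let L = D − 𝒢 be its Laplace operator on L²(X, ν), where (Df)(x) = deg(x) f(x) and (𝒢f)(x) = Σ_{(x,v) ∈ E(𝒢)} f(v). Then the multiplicity of the eigenvalue 0 of L is 1 — i.e. the kernel of L in L²(X, ν) consists exactly of the constant functions — if and only if 𝒢 is ergodic. -/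
open MeasureTheory Filter
open scoped ENNReal

noncomputable section

/-! ### Graphings as operators -/

/-- The degree of a point of a graphing. -/
def Graphing.deg {d : ℕ} (𝒢 : Graphing d) (x : 𝒢.X) : ℕ :=
  (𝒢.graph.neighborSet x).ncard

/-- The adjacency operator of a graphing acting on complex functions:
`(𝒢 f)(x) = ∑_{(x,v) ∈ E(𝒢)} f(v)`. -/
def Graphing.adjOp {d : ℕ} (𝒢 : Graphing d) (f : 𝒢.X → ℂ) (x : 𝒢.X) : ℂ :=
  ∑ᶠ v ∈ 𝒢.graph.neighborSet x, f v

/-- The Laplace operator `L = D - 𝒢` of a graphing. -/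
def Graphing.lap {d : ℕ} (𝒢 : Graphing d) (f : 𝒢.X → ℂ) (x : 𝒢.X) : ℂ :=
  (𝒢.deg x : ℂ) * f x - 𝒢.adjOp f x

/-- The adjacency operator acting on real functions. -/
def Graphing.adjOpR {d : ℕ} (𝒢 : Graphing d) (f : 𝒢.X → ℝ) (x : 𝒢.X) : ℝ :=
  ∑ᶠ v ∈ 𝒢.graph.neighborSet x, f v

/-- A graphing is `d`-regular if every point has exactly `d` neighbours. -/
def Graphing.IsRegular {d : ℕ} (𝒢 : Graphing d) : Prop :=
  ∀ x, (𝒢.graph.neighborSet x).ncard = d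

/-- A graphing is a `c`-expander if `ν(N₁(S)) ≥ (1+c)·ν(S)` for every Borel set `S` with
`0 < ν(S) ≤ 1/2`, where `N₁(S)` is the `1`-neighborhood of `S`. -/
def Graphing.IsExpander {d : ℕ} (𝒢 : Graphing d) (c : ℝ) : Prop :=
  ∀ S : Set 𝒢.X, MeasurableSet S → 0 < 𝒢.ν S → 𝒢.ν S ≤ 1 / 2 →
    (1 + c) * (𝒢.ν S).toReal ≤ (𝒢.ν (⋃ x ∈ S, 𝒢.graph.ballSet x 1)).toReal

/-- The spectral gap of a `d`-regular graphing: `inf { ⟨Lf,f⟩ : ‖f‖₂ = 1, ⟨f,1⟩ = 0 }`. -/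
def Graphing.gap {d : ℕ} (𝒢 : Graphing d) : ℝ :=
  sInf {t : ℝ | ∃ f : 𝒢.X → ℝ, MemLp f 2 𝒢.ν ∧ (∫ x, (f x) ^ 2 ∂𝒢.ν) = 1 ∧
    (∫ x, f x ∂𝒢.ν) = 0 ∧ t = ∫ x, ((d : ℝ) * f x - 𝒢.adjOpR f x) * f x ∂𝒢.ν}

/-- A graphing is ergodic if the vertex set cannot be partitioned into two positive-measure
Borel sets with no edges between them. -/
def Graphing.IsErgodic {d : ℕ} (𝒢 : Graphing d) : Prop :=
  ¬ ∃ A : Set 𝒢.X, MeasurableSet A ∧ 0 < 𝒢.ν A ∧ 𝒢.ν A < 1 ∧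
      ∀ x y, x ∈ A → 𝒢.graph.Adj x y → y ∈ A

/-!
If `A` is an invariant Borel set with `0 < ν A < 1`, its indicator is a non-constant element of
the kernel of `L`. Conversely, at a point `x` where `f` is harmonic,
`∑_{y ~ x} ‖f y - f x‖² + deg x ‖f x‖² = ∑_{y ~ x} ‖f y‖²`, and the mass transport principle
`∫ ∑_{y ~ x} g y dν = ∫ deg · g dν` (the involution invariance of `ν`, applied to `g = ‖f‖²`)
shows that the first sum vanishes almost everywhere. So `f` is a.e. constant along edges, and
ergodicity makes it a.e. constant. Mass transport needs `x ↦ #(N(x) ∩ B)` to be measurable; this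
follows from Lusin–Novikov uniformization of the Borel edge set, whose sections have at most `d`
points.
-/

open Set

theorem Finset.sum_norm_sub_sq_add_card_mul_norm_sq {ι E : Type*} [NormedAddCommGroup E]
    [InnerProductSpace ℝ E] (s : Finset ι) (f : ι → E) {c : E} (hc : ∑ i ∈ s, f i = s.card • c) :
    ∑ i ∈ s, ‖f i - c‖ ^ 2 + s.card * ‖c‖ ^ 2 = ∑ i ∈ s, ‖f i‖ ^ 2 := by
  have hinner : ∑ i ∈ s, inner ℝ (f i) c = s.card * ‖c‖ ^ 2 := by
    rw [← sum_inner, hc, inner_smul_left_eq_smul, real_inner_self_eq_norm_sq, nsmul_eq_mul]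
  simp only [norm_sub_sq_real, Finset.sum_add_distrib, Finset.sum_sub_distrib, ← Finset.mul_sum,
    hinner, Finset.sum_const, nsmul_eq_mul]
  ring

theorem Finset.sum_enorm_sub_sq_add_card_mul_enorm_sq {ι E : Type*} [NormedAddCommGroup E]
    [InnerProductSpace ℝ E] (s : Finset ι) (f : ι → E) {c : E} (hc : ∑ i ∈ s, f i = s.card • c) :
    ∑ i ∈ s, ‖f i - c‖ₑ ^ 2 + s.card * ‖c‖ₑ ^ 2 = ∑ i ∈ s, ‖f i‖ₑ ^ 2 := by
  simp only [enorm_eq_nnnorm]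
  norm_cast
  rw [← NNReal.coe_inj]
  push_cast
  exact s.sum_norm_sub_sq_add_card_mul_norm_sq f hc

theorem not_ae_indicator_one_eq_const {α M : Type*} [MeasurableSpace α] {μ : Measure α}
    [IsProbabilityMeasure μ] [Zero M] [One M] [NeZero (1 : M)] {A : Set α} (hA : MeasurableSet A)
    (hpos : 0 < μ A) (hlt : μ A < 1) (a : M) : ¬ ∀ᵐ x ∂μ, A.indicator 1 x = a := by
  intro h
  have hAc : μ Aᶜ ≠ 0 := by
    rw [prob_compl_eq_one_sub hA]
    exact (tsub_pos_of_lt hlt).ne'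
  obtain ⟨x, hx, hxa⟩ := Measure.exists_mem_of_measure_ne_zero_of_ae hpos.ne' (ae_restrict_of_ae h)
  obtain ⟨y, hy, hya⟩ := Measure.exists_mem_of_measure_ne_zero_of_ae hAc (ae_restrict_of_ae h)
  rw [indicator_of_mem hx] at hxa
  rw [indicator_of_notMem hy] at hya
  exact one_ne_zero (hxa.trans hya.symm)

theorem Set.natCast_le_encard_iff {Y : Type*} {s : Set Y} {k : ℕ} :
    (k : ℕ∞) ≤ s.encard ↔ ∃ y : Fin k → Y, Function.Injective y ∧ ∀ i, y i ∈ s := by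
  constructor
  · intro h
    obtain ⟨y, -⟩ := Fin.Embedding.exists_embedding_disjoint_range_of_add_le_ENat_card
      (s := (∅ : Set s)) (n := k) (by simpa using h)
    exact ⟨fun i => y i, Subtype.val_injective.comp y.injective, fun i => (y i).2⟩
  · rintro ⟨y, hy, hys⟩
    calc (k : ℕ∞) = (range y).encard := by
          rw [← image_univ, hy.encard_image, encard_univ, ENat.card_eq_coe_fintype_card,
            Fintype.card_fin]
      _ ≤ s.encard := encard_le_encard (range_subset_iff.mpr hys)

theorem count_preimage_mk_eq_indicator {X Y : Type*} [MeasurableSpace Y]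
    [MeasurableSingletonClass Y] {G : Set (X × Y)} (hG : ∀ x, (Prod.mk x ⁻¹' G).Subsingleton)
    (x : X) : Measure.count (Prod.mk x ⁻¹' G) = (Prod.fst '' G).indicator 1 x := by
  rcases (Prod.mk x ⁻¹' G).eq_empty_or_nonempty with h | ⟨y, hy⟩
  · have hx : x ∉ Prod.fst '' G := by
      rintro ⟨⟨x, y⟩, hy, rfl⟩
      exact h.subset hy
    rw [h, indicator_of_notMem hx, measure_empty]
  · have hx : x ∈ Prod.fst '' G := ⟨(x, y), hy, rfl⟩
    rw [(hG x).eq_singleton_of_mem hy, Measure.count_singleton, indicator_of_mem hx, Pi.one_apply]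

section LusinNovikov

variable {X Y : Type*} [TopologicalSpace X] [PolishSpace X] [MeasurableSpace X] [BorelSpace X]
  [TopologicalSpace Y] [PolishSpace Y] [MeasurableSpace Y] [BorelSpace Y]

theorem analyticSet_setOf_natCast_le_encard {E : Set (X × Y)} (hE : MeasurableSet E) (k : ℕ) :
    AnalyticSet {x | (k : ℕ∞) ≤ (Prod.mk x ⁻¹' E).encard} := by
  have hF : MeasurableSet
      {p : X × (Fin k → Y) | Function.Injective p.2 ∧ ∀ i, (p.1, p.2 i) ∈ E} := by
    simp only [Function.Injective, ofPred_and, ofPred_forall]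
    refine MeasurableSet.inter ?_ (MeasurableSet.iInter fun i => ?_)
    · refine MeasurableSet.iInter fun i => MeasurableSet.iInter fun j => ?_
      by_cases hij : i = j
      · simp [hij]
      · convert (measurableSet_eq_fun (f := fun p : X × (Fin k → Y) => p.2 i)
          (g := fun p => p.2 j) (by fun_prop) (by fun_prop)).compl using 1
        ext; simp [hij]
    · exact hE.preimage (by fun_prop)
  convert hF.analyticSet.image_of_continuous continuous_fst using 1
  ext x
  simp [natCast_le_encard_iff]

theorem exists_measurableSet_image_fst_subset_encard_le {n : ℕ} {E F F' : Set (X × Y)}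
    (hE : ∀ x, (Prod.mk x ⁻¹' E).encard ≤ n + 1) (hF : MeasurableSet F) (hF' : MeasurableSet F')
    (hFE : F ⊆ E) (hF'E : F' ⊆ E) (hdisj : Disjoint F F') :
    ∃ C : Set X, MeasurableSet C ∧ Prod.fst '' F' ⊆ C ∧
      ∀ x ∈ C, (Prod.mk x ⁻¹' F).encard ≤ n := by
  have hsep : Disjoint (Prod.fst '' F') {x | ((n + 1 : ℕ) : ℕ∞) ≤ (Prod.mk x ⁻¹' F).encard} := by
    rw [disjoint_left]
    rintro _ ⟨⟨x, y⟩, hy, rfl⟩ hx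
    simp only [mem_ofPred_eq] at hx
    have hyF : y ∉ Prod.mk x ⁻¹' F := fun hyF => disjoint_left.mp hdisj hyF hy
    have hsub : insert y (Prod.mk x ⁻¹' F) ⊆ Prod.mk x ⁻¹' E :=
      insert_subset (hF'E hy) fun z hz => hFE hz
    have := (encard_le_encard hsub).trans (hE x)
    rw [encard_insert_of_notMem hyF] at this
    have h2 : ((n + 1 : ℕ) : ℕ∞) + 1 ≤ n + 1 := le_trans (by gcongr) this
    norm_cast at h2
    omega
  obtain ⟨C, hC', hCdisj, hC⟩ :=
    (hF'.analyticSet.image_of_continuous continuous_fst).measurablySeparable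
      (analyticSet_setOf_natCast_le_encard hF (n + 1)) hsep
  refine ⟨C, hC, hC', fun x hx => ?_⟩
  have : ¬ ((n + 1 : ℕ) : ℕ∞) ≤ (Prod.mk x ⁻¹' F).encard := fun h => disjoint_left.mp hCdisj h hx
  push_cast at this
  exact Order.le_of_lt_add_one (not_le.mp this)

/-- Lusin–Novikov uniformization for Borel sets with uniformly bounded sections. -/
theorem exists_countable_sUnion_eq_of_encard_section_le (n : ℕ) {E : Set (X × Y)}
    (hE : MeasurableSet E) (hn : ∀ x, (Prod.mk x ⁻¹' E).encard ≤ n) :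
    ∃ 𝒞 : Set (Set (X × Y)), 𝒞.Countable ∧
      (∀ G ∈ 𝒞, MeasurableSet G ∧ ∀ x, (Prod.mk x ⁻¹' G).Subsingleton) ∧ ⋃₀ 𝒞 = E := by
  induction n generalizing E with
  | zero =>
    refine ⟨{E}, countable_singleton E, fun G hG => ?_, sUnion_singleton E⟩
    rw [mem_singleton_iff.mp hG]
    refine ⟨hE, fun x => ?_⟩
    simp only [Nat.cast_zero, nonpos_iff_eq_zero, encard_eq_zero] at hn
    simp [hn x]
  | succ n ih =>
    obtain ⟨j, hj⟩ := exists_measurableEmbedding_real Y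
    set L : ℚ → Set (X × Y) := fun q => E ∩ {p | j p.2 < q}
    set R : ℚ → Set (X × Y) := fun q => E ∩ {p | q < j p.2}
    have hL : ∀ q, MeasurableSet (L q) := fun q =>
      hE.inter (measurableSet_lt (hj.measurable.comp measurable_snd) measurable_const)
    have hR : ∀ q, MeasurableSet (R q) := fun q =>
      hE.inter (measurableSet_lt measurable_const (hj.measurable.comp measurable_snd))
    have hLR : ∀ q, Disjoint (L q) (R q) := fun q =>
      disjoint_left.mpr fun p hL hR => lt_asymm (show j p.2 < q from hL.2) hR.2
    choose C hC hRC hCL using fun q => exists_measurableSet_image_fst_subset_encard_le hn (hL q)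
      (hR q) inter_subset_left inter_subset_left (hLR q)
    -- Over `C q` the part of `E` below `q` has at most `n` points, and `C q` contains every `x`
    -- with a point of `E` above `q`. So of two points in a section of `E`, the lower one lies in
    -- some `L' q`, and what remains, `W`, has subsingleton sections.
    set L' : ℚ → Set (X × Y) := fun q => L q ∩ Prod.fst ⁻¹' C q
    have hL' : ∀ q, MeasurableSet (L' q) := fun q => (hL q).inter (measurable_fst (hC q))
    have hL'n : ∀ q x, (Prod.mk x ⁻¹' L' q).encard ≤ n := by
      intro q x
      rcases (Prod.mk x ⁻¹' L' q).eq_empty_or_nonempty with h | ⟨y, hy⟩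
      · simp [h]
      · exact (encard_le_encard fun z hz => hz.1).trans (hCL q x hy.2)
    choose 𝒞 h𝒞 h𝒞G h𝒞E using fun q => ih (hL' q) (hL'n q)
    set W := E \ ⋃ q, L' q
    have hW : ∀ x, (Prod.mk x ⁻¹' W).Subsingleton := by
      have key : ∀ x y z, (x, y) ∈ W → (x, z) ∈ E → j y < j z → False := by
        intro x y z hy hz hyz
        obtain ⟨q, hyq, hqz⟩ := exists_rat_btwn hyz
        exact hy.2 (mem_iUnion.mpr ⟨q, ⟨hy.1, hyq⟩, hRC q ⟨(x, z), ⟨hz, hqz⟩, rfl⟩⟩)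
      intro x y hy z hz
      by_contra hyz
      rcases lt_or_gt_of_ne (hj.injective.ne hyz) with h | h
      · exact key x y z hy hz.1 h
      · exact key x z y hz hy.1 h
    refine ⟨insert W (⋃ q, 𝒞 q), (countable_iUnion h𝒞).insert W, ?_, ?_⟩
    · rintro G (rfl | hG)
      · exact ⟨hE.diff (MeasurableSet.iUnion hL'), hW⟩
      · obtain ⟨q, hq⟩ := mem_iUnion.mp hG
        exact h𝒞G q G hq
    · rw [sUnion_insert, sUnion_iUnion]
      simp only [h𝒞E]
      exact sdiff_union_of_subset (iUnion_subset fun q => inter_subset_left.trans inter_subset_left)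

theorem measurable_count_preimage_mk_of_encard_le {n : ℕ} {E : Set (X × Y)}
    (hE : MeasurableSet E) (hn : ∀ x, (Prod.mk x ⁻¹' E).encard ≤ n) :
    Measurable fun x => Measure.count (Prod.mk x ⁻¹' E) := by
  obtain ⟨𝒞, h𝒞, h𝒞G, rfl⟩ := exists_countable_sUnion_eq_of_encard_section_le n hE hn
  obtain ⟨F, hF⟩ := (h𝒞.insert ∅).exists_eq_range (insert_nonempty _ _)
  have hFG : ∀ i, MeasurableSet (F i) ∧ ∀ x, (Prod.mk x ⁻¹' F i).Subsingleton := by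
    intro i
    rcases (hF ▸ mem_range_self i : F i ∈ insert ∅ 𝒞) with h | h
    · simp [h]
    · exact h𝒞G _ h
  have hD : ∀ i, MeasurableSet (disjointed F i) := MeasurableSet.disjointed fun i => (hFG i).1
  have hDG : ∀ i x, (Prod.mk x ⁻¹' disjointed F i).Subsingleton := fun i x =>
    (hFG i).2 x |>.anti (preimage_mono (disjointed_subset F i))
  have hcount : ∀ x, Measure.count (Prod.mk x ⁻¹' ⋃₀ 𝒞) =
      ∑' i, (Prod.fst '' disjointed F i).indicator 1 x := by
    intro x
    rw [← empty_union (⋃₀ 𝒞), ← sUnion_insert, hF, sUnion_range, ← iUnion_disjointed,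
      preimage_iUnion, measure_iUnion (fun i i' hii' => (disjoint_disjointed F hii').preimage _)
        fun i => measurable_prodMk_left (hD i)]
    exact tsum_congr fun i => count_preimage_mk_eq_indicator (hDG i) x
  simp only [hcount]
  exact Measurable.tsum fun i => measurable_one.indicator <|
    (hD i).image_of_measurable_injOn measurable_fst fun p hp p' hp' (h : p.1 = p'.1) =>
      Prod.ext h (hDG i p.1 (by simpa using hp) (by simpa [h] using hp'))

theorem measurable_count_restrict_preimage_mk_of_encard_le {n : ℕ} {E : Set (X × Y)}
    (hE : MeasurableSet E) (hn : ∀ x, (Prod.mk x ⁻¹' E).encard ≤ n) :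
    Measurable fun x => Measure.count.restrict (Prod.mk x ⁻¹' E) := by
  refine Measure.measurable_of_measurable_coe _ fun B hB => ?_
  have := measurable_count_preimage_mk_of_encard_le (hE.inter (MeasurableSet.univ.prod hB))
    fun x => (encard_le_encard fun y hy => hy.1).trans (hn x)
  simp_rw [preimage_inter, mk_preimage_prod_right (mem_univ _)] at this
  simp_rw [Measure.restrict_apply hB, inter_comm B]
  exact this

end LusinNovikov

namespace Graphing

variable {d : ℕ} (𝒢 : Graphing d)

def nbrFinset (x : 𝒢.X) : Finset 𝒢.X := (𝒢.nbr_finite x).toFinset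

@[simp] lemma mem_nbrFinset {x y : 𝒢.X} : y ∈ 𝒢.nbrFinset x ↔ 𝒢.graph.Adj x y := by
  simp [nbrFinset]

lemma card_nbrFinset (x : 𝒢.X) : (𝒢.nbrFinset x).card = 𝒢.deg x :=
  (Set.ncard_eq_toFinset_card _ _).symm

lemma lap_eq (f : 𝒢.X → ℂ) (x : 𝒢.X) :
    𝒢.lap f x = 𝒢.deg x * f x - ∑ y ∈ 𝒢.nbrFinset x, f y := by
  rw [lap, adjOp, finsum_mem_eq_finite_toFinset_sum]
  rfl

lemma lap_eq_zero_of_forall_adj_eq {f : 𝒢.X → ℂ} {x : 𝒢.X}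
    (h : ∀ y, 𝒢.graph.Adj x y → f y = f x) : 𝒢.lap f x = 0 := by
  rw [lap_eq, Finset.sum_congr rfl fun y hy => h y ((mem_nbrFinset 𝒢).mp hy), Finset.sum_const,
    card_nbrFinset, nsmul_eq_mul, sub_self]

lemma lap_indicator_one_eq_zero {A : Set 𝒢.X} (hA : ∀ x y, x ∈ A → 𝒢.graph.Adj x y → y ∈ A)
    (x : 𝒢.X) : 𝒢.lap (A.indicator 1) x = 0 := by
  refine 𝒢.lap_eq_zero_of_forall_adj_eq fun y hxy => ?_
  by_cases hx : x ∈ A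
  · simp [hx, hA x y hx hxy]
  · simp [hx, show y ∉ A from fun hy => hx (hA y x hy hxy.symm)]

def nbrMeasure (x : 𝒢.X) : Measure 𝒢.X := Measure.count.restrict (𝒢.graph.neighborSet x)

lemma measurable_nbrMeasure : Measurable 𝒢.nbrMeasure :=
  measurable_count_restrict_preimage_mk_of_encard_le 𝒢.edge_borel fun x =>
    (𝒢.nbr_finite x).cast_ncard_eq.symm.le.trans (by exact_mod_cast 𝒢.deg_le x)

lemma nbrMeasure_apply {B : Set 𝒢.X} (hB : MeasurableSet B) (x : 𝒢.X) :
    𝒢.nbrMeasure x B = ((𝒢.graph.neighborSet x ∩ B).ncard : ℝ≥0∞) := by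
  rw [nbrMeasure, Measure.restrict_apply hB, Set.inter_comm,
    Measure.count_apply_finite _ ((𝒢.nbr_finite x).inter_of_left B),
    Set.ncard_eq_toFinset_card _ ((𝒢.nbr_finite x).inter_of_left B)]

lemma measurable_deg : Measurable fun x => (𝒢.deg x : ℝ≥0∞) := by
  convert (Measure.measurable_coe MeasurableSet.univ).comp 𝒢.measurable_nbrMeasure using 1
  ext x
  simp [nbrMeasure_apply, deg]

lemma bind_nbrMeasure :
    𝒢.ν.bind 𝒢.nbrMeasure = 𝒢.ν.withDensity fun x => (𝒢.deg x : ℝ≥0∞) := by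
  ext B hB
  rw [Measure.bind_apply hB 𝒢.measurable_nbrMeasure.aemeasurable, withDensity_apply _ hB]
  simp_rw [nbrMeasure_apply 𝒢 hB]
  rw [← setLIntegral_univ, 𝒢.mpres Set.univ B MeasurableSet.univ hB]
  simp [deg]

lemma lintegral_nbrMeasure (g : 𝒢.X → ℝ≥0∞) (x : 𝒢.X) :
    ∫⁻ y, g y ∂𝒢.nbrMeasure x = ∑ y ∈ 𝒢.nbrFinset x, g y := by
  rw [nbrMeasure, ← (𝒢.nbr_finite x).coe_toFinset, lintegral_finset]
  simp [nbrFinset]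

lemma measurable_sum_nbrFinset {g : 𝒢.X → ℝ≥0∞} (hg : Measurable g) :
    Measurable fun x => ∑ y ∈ 𝒢.nbrFinset x, g y := by
  convert (Measure.measurable_lintegral hg).comp 𝒢.measurable_nbrMeasure using 1
  ext x
  simp [lintegral_nbrMeasure]

/-- The mass transport principle. -/
theorem lintegral_sum_nbrFinset {g : 𝒢.X → ℝ≥0∞} (hg : Measurable g) :
    ∫⁻ x, ∑ y ∈ 𝒢.nbrFinset x, g y ∂𝒢.ν = ∫⁻ x, 𝒢.deg x * g x ∂𝒢.ν := by
  simp_rw [← lintegral_nbrMeasure]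
  rw [← Measure.lintegral_bind 𝒢.measurable_nbrMeasure.aemeasurable hg.aemeasurable,
    bind_nbrMeasure, lintegral_withDensity_eq_lintegral_mul _ 𝒢.measurable_deg hg]
  rfl

theorem ae_forall_adj {p : 𝒢.X → Prop} (h : ∀ᵐ x ∂𝒢.ν, p x) :
    ∀ᵐ x ∂𝒢.ν, ∀ y, 𝒢.graph.Adj x y → p y := by
  have hbind : ∀ᵐ y ∂𝒢.ν.bind 𝒢.nbrMeasure, p y := by
    rw [bind_nbrMeasure]
    exact (withDensity_absolutelyContinuous _ _).ae_le h
  filter_upwards [Measure.ae_ae_of_ae_bind 𝒢.measurable_nbrMeasure.aemeasurable hbind]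
    with x hx y hxy
  rw [nbrMeasure, ae_restrict_iff' (𝒢.nbr_finite x).measurableSet, Measure.ae_count_iff] at hx
  exact hx y hxy

theorem exists_measurableSet_forall_adj_mem_of_ae {p : 𝒢.X → Prop} (h : ∀ᵐ x ∂𝒢.ν, p x) :
    ∃ G : Set 𝒢.X, MeasurableSet G ∧ (∀ᵐ x ∂𝒢.ν, x ∈ G) ∧ (∀ x ∈ G, p x) ∧
      ∀ x y, x ∈ G → 𝒢.graph.Adj x y → y ∈ G := by
  -- `N k` is a measurable null set containing every point at distance `≤ k` from `{x | ¬ p x}`.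
  let N : ℕ → Set 𝒢.X := fun k => Nat.rec (toMeasurable 𝒢.ν {x | ¬ p x})
    (fun _ N => toMeasurable 𝒢.ν (N ∪ {x | ∃ y, 𝒢.graph.Adj x y ∧ y ∈ N})) k
  have hN : ∀ k, MeasurableSet (N k) := fun k => by
    cases k <;> exact measurableSet_toMeasurable _ _
  have hN0 : ∀ k, 𝒢.ν (N k) = 0 := by
    intro k
    induction k with
    | zero => exact (measure_toMeasurable _).trans (ae_iff.mp h)
    | succ k ih =>
      refine (measure_toMeasurable _).trans (measure_union_null ih ?_)
      have := 𝒢.ae_forall_adj (measure_eq_zero_iff_ae_notMem.mp ih)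
      rw [ae_iff] at this
      simpa using this
  refine ⟨(⋃ k, N k)ᶜ, (MeasurableSet.iUnion hN).compl, ?_, fun x hx => ?_, ?_⟩
  · exact measure_eq_zero_iff_ae_notMem.mp (measure_iUnion_null hN0)
  · by_contra hpx
    exact hx (mem_iUnion.mpr ⟨0, subset_toMeasurable _ _ hpx⟩)
  · intro x y hx hxy hy
    obtain ⟨k, hk⟩ := mem_iUnion.mp hy
    exact hx (mem_iUnion.mpr ⟨k + 1, subset_toMeasurable _ _ (Or.inr ⟨y, hxy, hk⟩)⟩)

theorem ae_lap_eq_of_ae_eq {f g : 𝒢.X → ℂ} (hfg : f =ᵐ[𝒢.ν] g) :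
    ∀ᵐ x ∂𝒢.ν, 𝒢.lap f x = 𝒢.lap g x := by
  filter_upwards [hfg, 𝒢.ae_forall_adj hfg] with x hx hadj
  rw [lap_eq, lap_eq, hx, Finset.sum_congr rfl fun y hy => hadj y ((mem_nbrFinset 𝒢).mp hy)]

theorem ae_forall_adj_eq_of_ae_lap_eq_zero {g : 𝒢.X → ℂ} (hg : Measurable g)
    (hg2 : MemLp g 2 𝒢.ν) (hlap : ∀ᵐ x ∂𝒢.ν, 𝒢.lap g x = 0) :
    ∀ᵐ x ∂𝒢.ν, ∀ y, 𝒢.graph.Adj x y → g y = g x := by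
  set q : 𝒢.X → ℝ≥0∞ := fun x => ‖g x‖ₑ ^ 2
  have hq : Measurable q := hg.enorm.pow_const 2
  have hsplit : ∀ᵐ x ∂𝒢.ν, ∑ y ∈ 𝒢.nbrFinset x, ‖g y - g x‖ₑ ^ 2 + 𝒢.deg x * q x
      = ∑ y ∈ 𝒢.nbrFinset x, q y := by
    filter_upwards [hlap] with x hx
    rw [lap_eq, sub_eq_zero] at hx
    rw [← card_nbrFinset]
    refine (𝒢.nbrFinset x).sum_enorm_sub_sq_add_card_mul_enorm_sq g ?_
    rw [← hx, card_nbrFinset, nsmul_eq_mul]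
  have hfin : ∫⁻ x, 𝒢.deg x * q x ∂𝒢.ν ≠ ∞ := by
    have hq2 : ∫⁻ x, q x ∂𝒢.ν < ∞ := by
      simpa [q] using lintegral_rpow_enorm_lt_top_of_eLpNorm_lt_top two_ne_zero
        ENNReal.ofNat_ne_top hg2.2
    refine (lt_of_le_of_lt ?_ (ENNReal.mul_lt_top (ENNReal.natCast_lt_top d) hq2)).ne
    rw [← lintegral_const_mul _ hq]
    exact lintegral_mono fun x => by gcongr; exact_mod_cast 𝒢.deg_le x
  have heq : (fun x => 𝒢.deg x * q x) =ᵐ[𝒢.ν] fun x => ∑ y ∈ 𝒢.nbrFinset x, q y :=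
    ae_eq_of_ae_le_of_lintegral_le (hsplit.mono fun x hx => le_add_self.trans_eq hx) hfin
      (𝒢.measurable_sum_nbrFinset hq).aemeasurable (𝒢.lintegral_sum_nbrFinset hq).le
  filter_upwards [hsplit, heq] with x hx hxeq y hxy
  rw [← hxeq] at hx
  have hne : 𝒢.deg x * q x ≠ ∞ :=
    ENNReal.mul_ne_top (ENNReal.natCast_ne_top _) (ENNReal.pow_ne_top enorm_ne_top)
  have hzero := (ENNReal.add_left_inj hne).mp (hx.trans (zero_add _).symm)
  simpa [sub_eq_zero] using Finset.sum_eq_zero_iff.mp hzero y ((mem_nbrFinset 𝒢).mpr hxy)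

variable {𝒢}

theorem IsErgodic.ae_mem_or_ae_notMem (herg : 𝒢.IsErgodic) {s : Set 𝒢.X} (hs : MeasurableSet s)
    (hinv : ∀ᵐ x ∂𝒢.ν, ∀ y, 𝒢.graph.Adj x y → (y ∈ s ↔ x ∈ s)) :
    (∀ᵐ x ∂𝒢.ν, x ∈ s) ∨ ∀ᵐ x ∂𝒢.ν, x ∉ s := by
  obtain ⟨G, hG, hGae, hGinv, hGadj⟩ := 𝒢.exists_measurableSet_forall_adj_mem_of_ae hinv
  have hA : ¬ (0 < 𝒢.ν (G ∩ s) ∧ 𝒢.ν (G ∩ s) < 1) := fun h =>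
    herg ⟨G ∩ s, hG.inter hs, h.1, h.2, fun x y hx hxy =>
      ⟨hGadj x y hx.1 hxy, (hGinv x hx.1 y hxy).mpr hx.2⟩⟩
  rcases eq_or_ne (𝒢.ν (G ∩ s)) 0 with h0 | h0
  · right
    filter_upwards [hGae, measure_eq_zero_iff_ae_notMem.mp h0] with x hxG hx hxs
    exact hx ⟨hxG, hxs⟩
  · left
    have h1 : 𝒢.ν (G ∩ s) = 1 :=
      le_antisymm prob_le_one (not_lt.mp fun h1 => hA ⟨pos_iff_ne_zero.mpr h0, h1⟩)
    filter_upwards [(ae_mem_iff_measure_eq (hG.inter hs).nullMeasurableSet).mpr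
      (by rw [h1, measure_univ])] with x hx
    exact hx.2

theorem IsErgodic.exists_ae_eq_const (herg : 𝒢.IsErgodic) {β : Type*} [Nonempty β]
    [MeasurableSpace β] [MeasurableSpace.CountablySeparated β] {g : 𝒢.X → β} (hg : Measurable g)
    (hinv : ∀ᵐ x ∂𝒢.ν, ∀ y, 𝒢.graph.Adj x y → g y = g x) :
    ∃ c, ∀ᵐ x ∂𝒢.ν, g x = c :=
  exists_eventuallyEq_const_of_forall_separating MeasurableSet fun U hU =>
    herg.ae_mem_or_ae_notMem (s := g ⁻¹' U) (hg hU) (hinv.mono fun x hx y hxy => by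
      rw [mem_preimage, mem_preimage, hx y hxy])

end Graphing

/-- The multiplicity of the eigenvalue `0` of the Laplace operator
`L = D - 𝒢` on `L²(X,ν)` is `1` (its kernel consists exactly of the constants) if and
only if the graphing `𝒢` is ergodic. -/
theorem lap_kernel_constants_iff_ergodic (d : ℕ) (𝒢 : Graphing d) :
    (∀ f : 𝒢.X → ℂ, MemLp f 2 𝒢.ν →
        ((∀ᵐ x ∂𝒢.ν, 𝒢.lap f x = 0) ↔ ∃ a : ℂ, ∀ᵐ x ∂𝒢.ν, f x = a))
      ↔ 𝒢.IsErgodic := by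
  constructor
  · rintro hker ⟨A, hA, hpos, hlt, hinv⟩
    obtain ⟨a, ha⟩ := (hker _ (memLp_indicator_const 2 hA 1 (Or.inr (measure_ne_top _ _)))).mp
      (ae_of_all _ (𝒢.lap_indicator_one_eq_zero hinv))
    exact not_ae_indicator_one_eq_const hA hpos hlt a ha
  · intro herg f hf
    refine ⟨fun hlap => ?_, fun ⟨a, ha⟩ => ?_⟩
    · set g := hf.1.mk f
      have hg : Measurable g := hf.1.stronglyMeasurable_mk.measurable
      have hlapg : ∀ᵐ x ∂𝒢.ν, 𝒢.lap g x = 0 := by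
        filter_upwards [hlap, 𝒢.ae_lap_eq_of_ae_eq hf.1.ae_eq_mk] with x hx hfg
        rwa [← hfg]
      obtain ⟨c, hc⟩ := herg.exists_ae_eq_const hg
        (𝒢.ae_forall_adj_eq_of_ae_lap_eq_zero hg (hf.ae_eq hf.1.ae_eq_mk) hlapg)
      exact ⟨c, hf.1.ae_eq_mk.trans hc⟩
    · filter_upwards [ha, 𝒢.ae_forall_adj ha] with x hx hadj
      exact 𝒢.lap_eq_zero_of_forall_adj_eq fun y hy => (hadj y hy).trans hx.symm
end
end
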